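/- Let ω be a primitive n-th root of unity and f holomorphic near 0 with f(ωz) = ωf(z), f(0) = 0, f'(0) = 1. Define F(w) = f(w^{1/n})^n (well-defined and holomorphic near 0 by the symmetry). Then for λ ∈ ℂ*, the map z ↦ λf(z) is linearizable at 0 (i.e., conjugate to w ↦ λw near 0 by a holomorphic map fixing 0 with derivative 1) if and only if w ↦ λⁿF(w) is linearizable at 0. -/

import Mathlib

/-!
If `h` linearizes `λ f`, the average of `ω⁻ᵏ h (ωᵏ z)` over `k < n` is a linearizer `g` that also
commutes with `z ↦ ω z`. Then `g z = z φ z` with `φ` invariant under `z ↦ ω z`, so the power series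
of `φⁿ` only involves powers of `zⁿ`, and `H (zⁿ) = (g z)ⁿ` defines a holomorphic `H` linearizing
`λⁿ F`. Conversely, if `H` linearizes `λⁿ F`, write `H w = w u w` with `u 0 = 1` and put
`k z = z u (zⁿ) ^ (1 / n)`, so that `(k z)ⁿ = H (zⁿ)`. Then `k (λ f z)` and `λ k z` have the same
`n`-th power and the same derivative `λ ≠ 0` at `0`: their quotient is an `n`-th root of unity
tending to `1`, hence equal to `1` near `0`.
-/

open Filter Complex

/-- `G` is linearizable at `0` with multiplier `μ`: conjugate to `w ↦ μ w` near `0`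
by a holomorphic map fixing `0` with derivative `1`. -/
def LinearizableAtZero (G : ℂ → ℂ) (μ : ℂ) : Prop :=
  ∃ h : ℂ → ℂ, AnalyticAt ℂ h 0 ∧ h 0 = 0 ∧ deriv h 0 = 1 ∧
    ∀ᶠ z in nhds (0 : ℂ), h (G z) = μ * h z

open Topology

section
variable {𝕜 : Type*} [NontriviallyNormedField 𝕜]

theorem mul_dslope_zero_of_map_zero {g : 𝕜 → 𝕜} (hg0 : g 0 = 0) (z : 𝕜) :
    z * dslope g 0 z = g z := by
  simpa [hg0] using sub_smul_dslope g 0 z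

theorem AnalyticAt.dslope_zero {g : 𝕜 → 𝕜} (hg : AnalyticAt 𝕜 g 0) :
    AnalyticAt 𝕜 (dslope g 0) 0 :=
  let ⟨_, hp⟩ := hg
  hp.has_fpower_series_dslope_fslope.analyticAt

theorem DifferentiableAt.hasDerivAt_id_mul {v : 𝕜 → 𝕜} (hv : DifferentiableAt 𝕜 v 0) :
    HasDerivAt (fun z => z * v z) (v 0) 0 := by
  simpa using (hasDerivAt_id' (0 : 𝕜)).fun_mul hv.hasDerivAt


def equivariantAverage (ω : 𝕜) (n : ℕ) (h : 𝕜 → 𝕜) (z : 𝕜) : 𝕜 :=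
  (n : 𝕜)⁻¹ * ∑ k ∈ Finset.range n, (ω ^ k)⁻¹ * h (ω ^ k * z)

section
variable {ω : 𝕜} {n : ℕ} {h : 𝕜 → 𝕜}

theorem AnalyticAt.equivariantAverage (hh : AnalyticAt 𝕜 h 0) :
    AnalyticAt 𝕜 (equivariantAverage ω n h) 0 := by
  refine analyticAt_const.mul (Finset.analyticAt_fun_sum _ fun k _ => analyticAt_const.mul ?_)
  exact hh.comp_of_eq (analyticAt_const.mul analyticAt_id) (mul_zero _)

theorem equivariantAverage_apply_zero (hh0 : h 0 = 0) : equivariantAverage ω n h 0 = 0 := by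
  simp [equivariantAverage, hh0]

theorem HasDerivAt.equivariantAverage {c : 𝕜} (hn : (n : 𝕜) ≠ 0) (hω : ω ≠ 0)
    (hh : HasDerivAt h c 0) : HasDerivAt (equivariantAverage ω n h) c 0 := by
  have hterm : ∀ k, HasDerivAt (fun z => (ω ^ k)⁻¹ * h (ω ^ k * z)) c 0 := fun k =>
    ((hh.comp_of_eq 0 ((hasDerivAt_id' 0).const_mul (ω ^ k)) (mul_zero _).symm).const_mul
      (ω ^ k)⁻¹).congr_deriv (by field_simp)
  exact ((HasDerivAt.fun_sum fun k (_ : k ∈ Finset.range n) => hterm k).const_mul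
    (n : 𝕜)⁻¹).congr_deriv (by simp [hn])

theorem equivariantAverage_mul_left (hω : ω ^ n = 1) (z : 𝕜) :
    equivariantAverage ω n h (ω * z) = ω * equivariantAverage ω n h z := by
  rcases eq_or_ne n 0 with rfl | hn
  · simp [equivariantAverage]
  have hω0 : ω ≠ 0 := fun h0 => by simp [h0, zero_pow hn] at hω
  set t : ℕ → 𝕜 := fun k => (ω ^ k)⁻¹ * h (ω ^ k * z)
  have hshift : ∑ k ∈ Finset.range n, t (k + 1) = ∑ k ∈ Finset.range n, t k := by
    have htn : t n = t 0 := by simp [t, hω]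
    have := (Finset.sum_range_succ' t n).symm.trans (Finset.sum_range_succ t n)
    rwa [htn, add_left_inj] at this
  have hterm : ∀ k, (ω ^ k)⁻¹ * h (ω ^ k * (ω * z)) = ω * t (k + 1) := fun k => by
    simp only [t, pow_succ, mul_assoc]
    field_simp
  simp only [equivariantAverage, hterm, ← Finset.mul_sum, hshift]
  ring

theorem eventually_map_pow_mul {G : 𝕜 → 𝕜} (hG : ∀ᶠ z in 𝓝 0, G (ω * z) = ω * G z) (k : ℕ) :
    ∀ᶠ z in 𝓝 0, G (ω ^ k * z) = ω ^ k * G z := by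
  induction k with
  | zero => simp
  | succ k ih =>
    filter_upwards [((continuous_const_mul ω).tendsto' 0 0 (mul_zero ω)).eventually ih, hG]
      with z h1 h2
    rw [pow_succ, mul_assoc, h1, h2, mul_assoc]

theorem eventually_equivariantAverage_comp {G : 𝕜 → 𝕜} {μ : 𝕜}
    (hG : ∀ᶠ z in 𝓝 0, G (ω * z) = ω * G z) (hh : ∀ᶠ z in 𝓝 0, h (G z) = μ * h z) :
    ∀ᶠ z in 𝓝 0, equivariantAverage ω n h (G z) = μ * equivariantAverage ω n h z := by
  have hk : ∀ k, ∀ᶠ z in 𝓝 0, h (ω ^ k * G z) = μ * h (ω ^ k * z) := fun k => by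
    filter_upwards [eventually_map_pow_mul hG k,
      ((continuous_const_mul (ω ^ k)).tendsto' 0 0 (mul_zero _)).eventually hh] with z h1 h2
    rw [← h1, h2]
  filter_upwards [(eventually_all_finset (Finset.range n)).2 fun k _ => hk k] with z hz
  have hsum : ∑ k ∈ Finset.range n, (ω ^ k)⁻¹ * h (ω ^ k * G z) =
      μ * ∑ k ∈ Finset.range n, (ω ^ k)⁻¹ * h (ω ^ k * z) := by
    rw [Finset.mul_sum]
    exact Finset.sum_congr rfl fun k hk => by rw [hz k hk]; ring
  rw [equivariantAverage, equivariantAverage, hsum]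
  ring

end

section
variable {E : Type*} [NormedAddCommGroup E] [NormedSpace 𝕜 E]

theorem HasFPowerSeriesAt.coeff_eq_zero_of_comp_mul_eq {ψ : 𝕜 → E}
    {p : FormalMultilinearSeries 𝕜 𝕜 E} (hp : HasFPowerSeriesAt ψ p 0) {ω : 𝕜} {n : ℕ}
    (hω : IsPrimitiveRoot ω n) (hψ : ∀ᶠ z in 𝓝 0, ψ (ω * z) = ψ z) {k : ℕ} (hk : ¬ n ∣ k) :
    p.coeff k = 0 := by
  set u : 𝕜 →L[𝕜] 𝕜 := ω • ContinuousLinearMap.id 𝕜 𝕜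
  have hu : HasFPowerSeriesAt (ψ ∘ u) (p.compContinuousLinearMap u) 0 :=
    (map_zero u).symm ▸ hp |>.compContinuousLinearMap
  have hpu : p.compContinuousLinearMap u = p :=
    (hu.congr (by filter_upwards [hψ] with z hz using hz)).eq_formalMultilinearSeries hp
  have hcoeff : ω ^ k • p.coeff k = p.coeff k := by
    have hu1 : (u ∘ 1 : Fin k → 𝕜) = fun _ => ω := funext fun _ => by simp [u]
    conv_rhs => rw [← hpu, FormalMultilinearSeries.coeff,
      FormalMultilinearSeries.compContinuousLinearMap_apply, hu1]
    exact FormalMultilinearSeries.apply_eq_pow_smul_coeff.symm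
  have hωk : ω ^ k - 1 ≠ 0 := sub_ne_zero.mpr fun h => hk ((hω.pow_eq_one_iff_dvd k).mp h)
  refine (smul_eq_zero.mp ?_).resolve_left hωk
  rw [sub_smul, hcoeff, one_smul, sub_self]

theorem HasFPowerSeriesAt.exists_analyticAt_comp_pow_eq [CompleteSpace E] {ψ : 𝕜 → E}
    {p : FormalMultilinearSeries 𝕜 𝕜 E} (hp : HasFPowerSeriesAt ψ p 0) {n : ℕ} (hn : n ≠ 0)
    (hcoeff : ∀ k, ¬ n ∣ k → p.coeff k = 0) :
    ∃ Ψ : 𝕜 → E, AnalyticAt 𝕜 Ψ 0 ∧ ∀ᶠ z in 𝓝 0, Ψ (z ^ n) = ψ z := by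
  set Q : FormalMultilinearSeries 𝕜 𝕜 E :=
    fun m => ContinuousMultilinearMap.mkPiRing 𝕜 (Fin m) (p.coeff (n * m))
  have hQ : ∀ m w, Q m (fun _ => w) = w ^ m • p.coeff (n * m) := by
    simp [Q, ContinuousMultilinearMap.mkPiRing_apply]
  have hQr : 0 < Q.radius := by
    obtain ⟨t, ht0, htp⟩ := ENNReal.lt_iff_exists_nnreal_btwn.mp hp.radius_pos
    obtain ⟨C, -, hC⟩ := p.norm_mul_pow_le_of_lt_radius htp
    refine lt_of_lt_of_le (by exact_mod_cast pow_pos (ENNReal.coe_pos.mp ht0) n)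
      (Q.le_radius_of_bound (r := t ^ n) C fun m => ?_)
    simpa [Q, FormalMultilinearSeries.norm_apply_eq_norm_coef, ← pow_mul] using hC (n * m)
  obtain ⟨r, hr⟩ := hp
  refine ⟨Q.sum, (Q.hasFPowerSeriesOnBall hQr).analyticAt, ?_⟩
  filter_upwards [Metric.eball_mem_nhds 0 hr.r_pos] with z hz
  have hψ : HasSum (fun k => z ^ k • p.coeff k) (ψ z) := by
    simpa [FormalMultilinearSeries.apply_eq_pow_smul_coeff] using hr.hasSum hz
  have hmul : Function.Injective (n * ·) := mul_right_injective₀ hn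
  have hsupp : ∀ k ∉ Set.range (n * ·), z ^ k • p.coeff k = 0 := fun k hk => by
    rw [hcoeff k fun ⟨m, hm⟩ => hk ⟨m, hm.symm⟩, smul_zero]
  refine HasSum.tsum_eq ?_
  simpa [hQ, Function.comp_def, pow_mul] using (hmul.hasSum_iff hsupp).mpr hψ

end

theorem exists_comp_pow_eq_pow_of_map_mul [CompleteSpace 𝕜] {n : ℕ} (hn : n ≠ 0) {ω : 𝕜}
    (hω : IsPrimitiveRoot ω n) {g : 𝕜 → 𝕜} (hg : AnalyticAt 𝕜 g 0) (hg0 : g 0 = 0)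
    (hequi : ∀ᶠ z in 𝓝 0, g (ω * z) = ω * g z) :
    ∃ H : 𝕜 → 𝕜, AnalyticAt 𝕜 H 0 ∧ H 0 = 0 ∧ HasDerivAt H (deriv g 0 ^ n) 0 ∧
      ∀ᶠ z in 𝓝 0, H (z ^ n) = g z ^ n := by
  set φ := dslope g 0
  have hφ : ∀ᶠ z in 𝓝 0, (φ ^ n) (ω * z) = (φ ^ n) z := by
    filter_upwards [hequi] with z hz
    rcases eq_or_ne z 0 with rfl | hz0
    · simp
    · simp only [Pi.pow_apply]
      congr 1
      apply mul_left_cancel₀ (mul_ne_zero (hω.ne_zero hn) hz0)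
      rw [mul_dslope_zero_of_map_zero hg0, hz, ← mul_dslope_zero_of_map_zero hg0 z, mul_assoc]
  obtain ⟨p, hp⟩ := hg.dslope_zero.pow n
  obtain ⟨Φ, hΦ, hΦpow⟩ :=
    hp.exists_analyticAt_comp_pow_eq hn fun k hk => hp.coeff_eq_zero_of_comp_mul_eq hω hφ hk
  have hΦ0 : Φ 0 = deriv g 0 ^ n := by simpa [zero_pow hn, φ] using hΦpow.self_of_nhds
  refine ⟨fun w => w * Φ w, analyticAt_id.mul hΦ, by simp,
    hΦ0 ▸ hΦ.differentiableAt.hasDerivAt_id_mul, ?_⟩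
  filter_upwards [hΦpow] with z hz
  rw [hz, Pi.pow_apply, ← mul_pow, mul_dslope_zero_of_map_zero hg0]

theorem HasDerivAt.tendsto_div_nhdsNE {A : 𝕜 → 𝕜} {c : 𝕜} (hA : HasDerivAt A c 0)
    (hA0 : A 0 = 0) : Tendsto (fun z => A z / z) (𝓝[≠] 0) (𝓝 c) := by
  have hslope : slope A 0 = fun z => A z / z := funext fun z => by simp [slope_def_field, hA0]
  exact hslope ▸ hasDerivAt_iff_tendsto_slope.mp hA

theorem eventually_eq_of_eventually_pow_eq {n : ℕ} (hn : n ≠ 0) {A B : 𝕜 → 𝕜} {c : 𝕜}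
    (hc : c ≠ 0) (hA : HasDerivAt A c 0) (hA0 : A 0 = 0) (hB : HasDerivAt B c 0)
    (hB0 : B 0 = 0) (hpow : ∀ᶠ z in 𝓝 0, A z ^ n = B z ^ n) : ∀ᶠ z in 𝓝 0, A z = B z := by
  have hratio : Tendsto (fun z => (A z / z) / (B z / z)) (𝓝[≠] 0) (𝓝 1) :=
    div_self hc ▸ (hA.tendsto_div_nhdsNE hA0).div (hB.tendsto_div_nhdsNE hB0) hc
  -- The `n`-th roots of unity other than `1` are finitely many, so they stay away from `1`.
  have hroots : {x : 𝕜 | x ^ n = 1 ∧ x ≠ 1}ᶜ ∈ 𝓝 1 := by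
    refine (Set.Finite.isClosed ?_).isOpen_compl.mem_nhds fun h => h.2 rfl
    exact (Polynomial.nthRootsFinset n (1 : 𝕜)).finite_toSet.subset fun x hx =>
      (Polynomial.mem_nthRootsFinset (Nat.pos_of_ne_zero hn) 1).2 hx.1
  rw [← nhdsNE_sup_pure, eventually_sup, eventually_pure]
  refine ⟨?_, by rw [hA0, hB0]⟩
  filter_upwards [hratio hroots, (hB.tendsto_div_nhdsNE hB0).eventually_ne hc,
    eventually_nhdsWithin_of_eventually_nhds hpow, self_mem_nhdsWithin] with z hroot hb hz hz0
  have hBz : B z ≠ 0 := fun h => hb (by simp [h])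
  have hq : A z / z / (B z / z) = A z / B z := by
    field_simp [show z ≠ 0 from hz0]
  simp only [Set.mem_preimage, Set.mem_compl_iff, Set.mem_ofPred_eq, hq, div_pow, hz,
    div_self (pow_ne_zero n hBz), true_and, not_not] at hroot
  exact (div_eq_one_iff_eq hBz).mp hroot

theorem eventually_nhds_zero_of_eventually_pow [IsAlgClosed 𝕜] {n : ℕ} (hn : n ≠ 0)
    {P : 𝕜 → Prop} (h : ∀ᶠ z in 𝓝 0, P (z ^ n)) : ∀ᶠ w in 𝓝 0, P w := by
  obtain ⟨ε, hε, hP⟩ := Metric.eventually_nhds_iff.mp h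
  refine Metric.eventually_nhds_iff.mpr ⟨ε ^ n, pow_pos hε n, fun {w} hw => ?_⟩
  obtain ⟨z, rfl⟩ := IsAlgClosed.exists_pow_nat_eq w (Nat.pos_of_ne_zero hn)
  refine hP ?_
  rw [dist_zero_right] at hw ⊢
  exact lt_of_pow_lt_pow_left₀ n hε.le (by rwa [← norm_pow])

end

theorem exists_pow_eq_comp_pow {n : ℕ} (hn : n ≠ 0) {G : ℂ → ℂ} (hG : AnalyticAt ℂ G 0)
    (hG0 : G 0 = 0) (hG1 : deriv G 0 = 1) :
    ∃ g : ℂ → ℂ, AnalyticAt ℂ g 0 ∧ g 0 = 0 ∧ HasDerivAt g 1 0 ∧ ∀ z, g z ^ n = G (z ^ n) := by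
  set v : ℂ → ℂ := fun z => dslope G 0 (z ^ n) ^ (n⁻¹ : ℂ)
  have hv : AnalyticAt ℂ v 0 :=
    (hG.dslope_zero.comp_of_eq (analyticAt_id.pow n) (zero_pow hn)).cpow analyticAt_const
      (by simp [zero_pow hn, hG1, one_mem_slitPlane])
  have hv0 : v 0 = 1 := by simp [v, zero_pow hn, hG1]
  refine ⟨fun z => z * v z, analyticAt_id.mul hv, by simp,
    hv0 ▸ hv.differentiableAt.hasDerivAt_id_mul, fun z => ?_⟩
  rw [mul_pow, cpow_nat_inv_pow _ hn, mul_dslope_zero_of_map_zero hG0]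

theorem LinearizableAtZero.of_comp_pow {n : ℕ} (hn : n ≠ 0) {G Ĝ : ℂ → ℂ} {μ : ℂ} (hμ : μ ≠ 0)
    (hG : HasDerivAt G μ 0) (hG0 : G 0 = 0) (hĜ : ∀ᶠ z in 𝓝 0, Ĝ (z ^ n) = G z ^ n)
    (hlin : LinearizableAtZero Ĝ (μ ^ n)) : LinearizableAtZero G μ := by
  obtain ⟨H, hH, hH0, hH1, hHconj⟩ := hlin
  obtain ⟨k, hk, hk0, hk1, hkpow⟩ := exists_pow_eq_comp_pow hn hH hH0 hH1
  refine ⟨k, hk, hk0, hk1.deriv, ?_⟩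
  have hpow : ∀ᶠ z in 𝓝 0, k (G z) ^ n = (μ * k z) ^ n := by
    filter_upwards [hĜ, ((continuous_pow n).tendsto' 0 0 (zero_pow hn)).eventually hHconj]
      with z h1 h2
    rw [hkpow, ← h1, h2, ← hkpow, mul_pow]
  exact eventually_eq_of_eventually_pow_eq hn hμ
    ((hk1.comp_of_eq 0 hG hG0.symm).congr_deriv (one_mul μ)) (by simp [hG0, hk0])
    (by simpa using hk1.const_mul μ) (by simp [hk0]) hpow

theorem LinearizableAtZero.comp_pow {n : ℕ} (hn : n ≠ 0) {ω : ℂ} (hω : IsPrimitiveRoot ω n)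
    {G Ĝ : ℂ → ℂ} {μ : ℂ} (hG : Tendsto G (𝓝 0) (𝓝 0))
    (hGω : ∀ᶠ z in 𝓝 0, G (ω * z) = ω * G z) (hĜ : ∀ᶠ z in 𝓝 0, Ĝ (z ^ n) = G z ^ n)
    (hlin : LinearizableAtZero G μ) : LinearizableAtZero Ĝ (μ ^ n) := by
  obtain ⟨h, hh, hh0, hh1, hconj⟩ := hlin
  have hg1 : HasDerivAt (equivariantAverage ω n h) 1 0 :=
    (hh1 ▸ hh.differentiableAt.hasDerivAt).equivariantAverage (Nat.cast_ne_zero.2 hn)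
      (hω.ne_zero hn)
  obtain ⟨H, hH, hH0, hH1, hHpow⟩ := exists_comp_pow_eq_pow_of_map_mul hn hω
    hh.equivariantAverage (equivariantAverage_apply_zero hh0)
    (.of_forall (equivariantAverage_mul_left hω.pow_eq_one))
  refine ⟨H, hH, hH0, by simpa [hg1.deriv] using hH1.deriv, ?_⟩
  refine eventually_nhds_zero_of_eventually_pow hn ?_
  filter_upwards [hĜ, hHpow, hG.eventually hHpow, eventually_equivariantAverage_comp hGω hconj]
    with z h1 h2 h3 h4
  rw [h1, h3, h4, mul_pow, h2]

theorem stmt17_general (n : ℕ) (hn : 1 ≤ n) (ω : ℂ) (hω : IsPrimitiveRoot ω n)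
    (f F : ℂ → ℂ)
    (hfa : AnalyticAt ℂ f 0) (hf0 : f 0 = 0) (hf1 : deriv f 0 = 1)
    (hsym : ∀ᶠ z in nhds (0 : ℂ), f (ω * z) = ω * f z)
    (hFf : ∀ᶠ z in nhds (0 : ℂ), F (z ^ n) = (f z) ^ n)
    (lam : ℂ) (hlam : lam ≠ 0) :
    LinearizableAtZero (fun z => lam * f z) lam ↔
      LinearizableAtZero (fun w => lam ^ n * F w) (lam ^ n) := by
  have hn0 : n ≠ 0 := Nat.one_le_iff_ne_zero.mp hn
  have hG : HasDerivAt (fun z => lam * f z) lam 0 := by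
    simpa [hf1] using hfa.differentiableAt.hasDerivAt.const_mul lam
  have hĜ : ∀ᶠ z in 𝓝 0, lam ^ n * F (z ^ n) = (lam * f z) ^ n := by
    filter_upwards [hFf] with z hz
    rw [hz, mul_pow]
  constructor
  · refine fun hlin => hlin.comp_pow hn0 hω ?_ ?_ hĜ
    · simpa [hf0] using hG.continuousAt.tendsto
    · filter_upwards [hsym] with z hz
      rw [hz, mul_left_comm]
  · exact LinearizableAtZero.of_comp_pow hn0 hlam hG (by simp [hf0]) hĜ

theorem stmt17 (n : ℕ) (hn : 1 ≤ n) (ω : ℂ) (hω : IsPrimitiveRoot ω n)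
    (f F : ℂ → ℂ)
    (hfa : AnalyticAt ℂ f 0) (hf0 : f 0 = 0) (hf1 : deriv f 0 = 1)
    (hsym : ∀ᶠ z in nhds (0 : ℂ), f (ω * z) = ω * f z)
    (hFa : AnalyticAt ℂ F 0) (hF0 : F 0 = 0) (hF1 : deriv F 0 = 1)
    (hFf : ∀ᶠ z in nhds (0 : ℂ), F (z ^ n) = (f z) ^ n)
    (lam : ℂ) (hlam : lam ≠ 0) :
    LinearizableAtZero (fun z => lam * f z) lam ↔
      LinearizableAtZero (fun w => lam ^ n * F w) (lam ^ n) :=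
  stmt17_general n hn ω hω f F hfa hf0 hf1 hsym hFf lam hlam
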